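/- arXiv:1505.04228 — 6 statements merged into one kernel-verified Lean document; each statement's English description precedes it below -/
import Mathlib

section
/- Let η be a piecewise-constant population size function with K pieces: η(t) = N_k for t_{k−1} ≤ t < t_k (where t_0 = 0, t_K = ∞, and all N_k > 0). Then the expected first coalescence time for a sample of size m satisfies c_m = (1/a_m) · Σ_{k=1}^{K} N_k (exp(−a_m S_{k−1}) − exp(−a_m S_k)), where S_k = Σ_{j=1}^{k} (t_j − t_{j−1})/N_j, S_0 = 0, and exp(−a_m S_K) is interpreted as 0. -/
/-!
On a piece where `η ≡ N`, the cumulative hazard `R_η` is affine with slope `1 / N`, so the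
integrand `x (a / N) e^{-a R_η(x)}` has the explicit antiderivative `-(x + N / a) e^{-a R_η(x)}`;
on the last, unbounded piece this antiderivative tends to `0`. Adding up the pieces, the boundary
terms `x e^{-a R_η(x)}` telescope to `t₀ e^0 = 0`, and only the terms
`(N_k / a) (e^{-a S_{k-1}} - e^{-a S_k})` survive.
-/

open MeasureTheory Set Filter Topology Real

theorem Finset.sum_Icc_one_eq_sum_range {M : Type*} [AddCommMonoid M] (g : ℕ → M) (n : ℕ) :
    ∑ k ∈ Finset.Icc 1 n, g k = ∑ k ∈ Finset.range n, g (k + 1) := by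
  rw [← Finset.Ico_add_one_right_eq_Icc, Finset.sum_Ico_eq_sum_range]
  simp [add_comm]

theorem integral_Ioi_eq_sum_intervalIntegral_add {E : Type*} [NormedAddCommGroup E]
    [NormedSpace ℝ E] {μ : Measure ℝ} {f : ℝ → E} {t : ℕ → ℝ} {n : ℕ}
    (hf : ∀ k < n, IntervalIntegrable f μ (t k) (t (k + 1)))
    (hf_tail : IntegrableOn f (Ioi (t n)) μ) :
    ∫ x in Ioi (t 0), f x ∂μ =
      ∑ k ∈ Finset.range n, (∫ x in t k..t (k + 1), f x ∂μ) +
        ∫ x in Ioi (t n), f x ∂μ := by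
  rw [intervalIntegral.sum_integral_adjacent_intervals (a := t) hf,
    intervalIntegral.integral_interval_add_Ioi' (IntervalIntegrable.trans_iterate hf) hf_tail]

theorem intervalIntegrable_of_eqOn_Ioo {E : Type*} [NormedAddCommGroup E] {f : ℝ → E}
    {x y : ℝ} {c : E} (hxy : x ≤ y) (h : EqOn f (fun _ => c) (Ioo x y)) :
    IntervalIntegrable f volume x y :=
  (intervalIntegrable_congr_uIoo (by rwa [uIoo_of_le hxy])).mpr intervalIntegrable_const

theorem intervalIntegral_eq_of_eqOn_Ioo {E : Type*} [NormedAddCommGroup E] [NormedSpace ℝ E]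
    [CompleteSpace E] {f : ℝ → E} {x y : ℝ} {c : E} (hxy : x ≤ y)
    (h : EqOn f (fun _ => c) (Ioo x y)) : ∫ u in x..y, f u = (y - x) • c := by
  rw [intervalIntegral.integral_congr_Ioo_of_le hxy h, intervalIntegral.integral_const]

section ConstantPiece

variable {a N : ℝ}

theorem hasDerivAt_constPiece_antideriv (ha : a ≠ 0) (hN : N ≠ 0) (p s x : ℝ) :
    HasDerivAt (fun y => -(y + N / a) * exp (-(a * (s + (y - p) / N))))
      (x * (a / N) * exp (-(a * (s + (x - p) / N)))) x := by
  have h := ((hasDerivAt_id' x).add_const (N / a)).neg.mul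
    (((((hasDerivAt_id' x).sub_const p).div_const N).const_add s).const_mul a).neg.exp
  refine h.congr_deriv ?_
  simp only [Pi.neg_apply]
  field_simp
  ring

theorem integral_constPiece (ha : a ≠ 0) (hN : N ≠ 0) (p s q : ℝ) :
    ∫ x in p..q, x * (a / N) * exp (-(a * (s + (x - p) / N))) =
      (p + N / a) * exp (-(a * s)) - (q + N / a) * exp (-(a * (s + (q - p) / N))) := by
  rw [intervalIntegral.integral_eq_sub_of_hasDerivAt
    (fun x _ => hasDerivAt_constPiece_antideriv ha hN p s x)
    (by apply Continuous.intervalIntegrable; fun_prop)]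
  simp only [sub_self, zero_div, add_zero]
  ring

theorem tendsto_constPiece_antideriv_atTop (ha : 0 < a) (hN : 0 < N) (p s : ℝ) :
    Tendsto (fun y => -(y + N / a) * exp (-(a * (s + (y - p) / N)))) atTop (𝓝 0) := by
  set d := p - N * s + N / a
  have hz : Tendsto (fun y => s + (y - p) / N) atTop atTop :=
    tendsto_atTop_add_const_left _ s
      ((tendsto_atTop_add_const_right _ (-p) tendsto_id).atTop_div_const hN)
  have hlim : Tendsto (fun z => -(N * (z * exp (-a * z)) + d * exp (-a * z))) atTop (𝓝 0) := by
    simpa using (((tendsto_rpow_mul_exp_neg_mul_atTop_nhds_zero 1 a ha).const_mul N).add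
      ((tendsto_rpow_mul_exp_neg_mul_atTop_nhds_zero 0 a ha).const_mul d)).neg
  refine (hlim.comp hz).congr fun y => ?_
  simp only [Function.comp_apply, d]
  field_simp
  ring

theorem integral_Ioi_constPiece (ha : 0 < a) (hN : 0 < N) {p : ℝ} (hp : 0 ≤ p) (s : ℝ) :
    IntegrableOn (fun x => x * (a / N) * exp (-(a * (s + (x - p) / N)))) (Ioi p) ∧
      ∫ x in Ioi p, x * (a / N) * exp (-(a * (s + (x - p) / N))) =
        (p + N / a) * exp (-(a * s)) := by
  have hcont : ContinuousWithinAt (fun y => -(y + N / a) * exp (-(a * (s + (y - p) / N))))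
      (Ici p) p := by
    fun_prop
  have hderiv := fun x (_ : x ∈ Ioi p) => hasDerivAt_constPiece_antideriv ha.ne' hN.ne' p s x
  have hnonneg : ∀ x ∈ Ioi p, 0 ≤ x * (a / N) * exp (-(a * (s + (x - p) / N))) :=
    fun x hx => by have : 0 ≤ x := hp.trans hx.le; positivity
  have htendsto := tendsto_constPiece_antideriv_atTop ha hN p s
  refine ⟨integrableOn_Ioi_deriv_of_nonneg hcont hderiv hnonneg htendsto, ?_⟩
  rw [integral_Ioi_of_hasDerivAt_of_nonneg hcont hderiv hnonneg htendsto]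
  simp only [sub_self, zero_div, add_zero]
  ring

end ConstantPiece

/-- The function `R_η` of the paper. -/
noncomputable def cumHazard (η : ℝ → ℝ) (x : ℝ) : ℝ := ∫ u in (0 : ℝ)..x, 1 / η u

section CumulativeHazard

variable {η : ℝ → ℝ} {a c p q : ℝ}

theorem cumHazard_of_eqOn_Ioo (hp : IntervalIntegrable (fun u => 1 / η u) volume 0 p)
    (hpq : p ≤ q) (h : EqOn η (fun _ => c) (Ioo p q)) :
    cumHazard η q = cumHazard η p + (q - p) / c := by
  have h' : EqOn (fun u => 1 / η u) (fun _ => 1 / c) (Ioo p q) := fun u hu => by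
    simp only [h hu]
  rw [cumHazard, cumHazard, ← intervalIntegral.integral_add_adjacent_intervals hp
    (intervalIntegrable_of_eqOn_Ioo hpq h'), intervalIntegral_eq_of_eqOn_Ioo hpq h',
    smul_eq_mul, mul_one_div]

theorem firstCoal_integrand_of_eqOn_Ioc (hp : IntervalIntegrable (fun u => 1 / η u) volume 0 p)
    {x : ℝ} (hpx : p < x) (h : EqOn η (fun _ => c) (Ioc p x)) :
    x * (a / η x) * exp (-(a * cumHazard η x)) =
      x * (a / c) * exp (-(a * (cumHazard η p + (x - p) / c))) := by
  rw [h ⟨hpx, le_rfl⟩, cumHazard_of_eqOn_Ioo hp hpx.le (h.mono Ioo_subset_Ioc_self)]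

theorem integral_firstCoal_of_eqOn_Ioo (ha : a ≠ 0) (hc : c ≠ 0)
    (hp : IntervalIntegrable (fun u => 1 / η u) volume 0 p) (hpq : p ≤ q)
    (h : EqOn η (fun _ => c) (Ioo p q)) :
    IntervalIntegrable (fun x => x * (a / η x) * exp (-(a * cumHazard η x))) volume p q ∧
      ∫ x in p..q, x * (a / η x) * exp (-(a * cumHazard η x)) =
        (p + c / a) * exp (-(a * cumHazard η p)) - (q + c / a) * exp (-(a * cumHazard η q)) := by
  have hF : EqOn (fun x => x * (a / η x) * exp (-(a * cumHazard η x)))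
      (fun x => x * (a / c) * exp (-(a * (cumHazard η p + (x - p) / c)))) (Ioo p q) :=
    fun x hx => firstCoal_integrand_of_eqOn_Ioc hp hx.1 (h.mono (Ioc_subset_Ioo_right hx.2))
  refine ⟨(intervalIntegrable_congr_uIoo (by rwa [uIoo_of_le hpq])).mpr
    (Continuous.intervalIntegrable (by fun_prop) _ _), ?_⟩
  rw [intervalIntegral.integral_congr_Ioo_of_le hpq hF, integral_constPiece ha hc,
    cumHazard_of_eqOn_Ioo hp hpq h]

theorem integral_Ioi_firstCoal_of_eqOn (ha : 0 < a) (hc : 0 < c) (hp₀ : 0 ≤ p)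
    (hp : IntervalIntegrable (fun u => 1 / η u) volume 0 p) (h : EqOn η (fun _ => c) (Ioi p)) :
    IntegrableOn (fun x => x * (a / η x) * exp (-(a * cumHazard η x))) (Ioi p) ∧
      ∫ x in Ioi p, x * (a / η x) * exp (-(a * cumHazard η x)) =
        (p + c / a) * exp (-(a * cumHazard η p)) := by
  have hF : EqOn (fun x => x * (a / η x) * exp (-(a * cumHazard η x)))
      (fun x => x * (a / c) * exp (-(a * (cumHazard η p + (x - p) / c)))) (Ioi p) :=
    fun x hx => firstCoal_integrand_of_eqOn_Ioc hp hx (h.mono Ioc_subset_Ioi_self)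
  obtain ⟨hint, hval⟩ := integral_Ioi_constPiece ha hc hp₀ (cumHazard η p)
  exact ⟨hint.congr_fun hF.symm measurableSet_Ioi,
    (setIntegral_congr_fun measurableSet_Ioi hF).trans hval⟩

end CumulativeHazard

theorem cumHazard_breakpoint_eq_sum {t N : ℕ → ℝ} {η : ℝ → ℝ} {n : ℕ} (ht₀ : t 0 = 0)
    (hmono : ∀ k < n, t k ≤ t (k + 1))
    (hη : ∀ k < n, EqOn η (fun _ => N (k + 1)) (Ioo (t k) (t (k + 1))))
    {k : ℕ} (hk : k ≤ n) :
    IntervalIntegrable (fun u => 1 / η u) volume 0 (t k) ∧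
      cumHazard η (t k) = ∑ j ∈ Finset.range k, (t (j + 1) - t j) / N (j + 1) := by
  have hpiece : ∀ j < k,
      EqOn (fun u => 1 / η u) (fun _ => 1 / N (j + 1)) (Ioo (t j) (t (j + 1))) :=
    fun j hj u hu => by simp only [hη j (by omega) hu]
  have hint : ∀ j < k, IntervalIntegrable (fun u => 1 / η u) volume (t j) (t (j + 1)) :=
    fun j hj => intervalIntegrable_of_eqOn_Ioo (hmono j (by omega)) (hpiece j hj)
  rw [cumHazard, ← ht₀, ← intervalIntegral.sum_integral_adjacent_intervals hint]
  refine ⟨IntervalIntegrable.trans_iterate hint, Finset.sum_congr rfl fun j hj => ?_⟩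
  have hjk := Finset.mem_range.mp hj
  rw [intervalIntegral_eq_of_eqOn_Ioo (hmono j (by omega)) (hpiece j hjk), smul_eq_mul,
    mul_one_div]

theorem sum_range_piece_telescope (a : ℝ) (t N e : ℕ → ℝ) (n : ℕ) :
    ∑ k ∈ Finset.range n,
        ((t k + N (k + 1) / a) * e k - (t (k + 1) + N (k + 1) / a) * e (k + 1)) +
        (t n + N (n + 1) / a) * e n =
      t 0 * e 0 +
        1 / a * (∑ k ∈ Finset.range n, N (k + 1) * (e k - e (k + 1)) + N (n + 1) * e n) := by
  induction n with
  | zero => simp only [Finset.range_zero, Finset.sum_empty, zero_add]; ring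
  | succ n ih =>
    rw [Finset.sum_range_succ, Finset.sum_range_succ]
    linear_combination ih

/-- For a piecewise-constant population size function `η` with `K` pieces
(`η(x) = N_k` on `[t_{k-1}, t_k)`, `t_0 = 0`, `t_K = ∞`), the expected first coalescence
time for a sample of size `m` equals
`(1/a_m) Σ_{k=1}^K N_k (e^{-a_m S_{k-1}} - e^{-a_m S_k})` with `S_k = Σ_{j≤k}(t_j - t_{j-1})/N_j`
and the convention `e^{-a_m S_K} = 0` (so the last term is `N_K e^{-a_m S_{K-1}}`). -/
theorem piecewise_constant_first_coal_time (K : ℕ) (hK : 1 ≤ K)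
    (t : ℕ → ℝ) (ht0 : t 0 = 0)
    (htmono : ∀ i j, i < j → j ≤ K - 1 → t i < t j)
    (N : ℕ → ℝ) (hN : ∀ k, 1 ≤ k → k ≤ K → 0 < N k)
    (η : ℝ → ℝ)
    (hη : ∀ k, 1 ≤ k → k ≤ K - 1 → ∀ x, t (k - 1) ≤ x → x < t k → η x = N k)
    (hηlast : ∀ x, t (K - 1) ≤ x → η x = N K)
    (m : ℕ) (hm : 2 ≤ m) (a : ℝ) (ha : a = m * (m - 1) / 2)
    (S : ℕ → ℝ) (hS : ∀ k, S k = ∑ j ∈ Finset.Icc 1 k, (t j - t (j - 1)) / N j) :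
    ∫ x in Set.Ioi (0 : ℝ), x * (a / η x) * Real.exp (-(a * ∫ u in (0:ℝ)..x, 1 / η u)) =
      (1 / a) * ((∑ k ∈ Finset.Icc 1 (K - 1),
          N k * (Real.exp (-(a * S (k - 1))) - Real.exp (-(a * S k)))) +
        N K * Real.exp (-(a * S (K - 1)))) := by
  obtain ⟨n, rfl⟩ : ∃ n, K = n + 1 := ⟨K - 1, by omega⟩
  simp only [Nat.add_sub_cancel] at htmono hηlast ⊢
  have ha₀ : 0 < a := by
    have : (2 : ℝ) ≤ m := by exact_mod_cast hm
    rw [ha]; nlinarith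
  have hmono : ∀ k < n, t k ≤ t (k + 1) := fun k hk => (htmono k (k + 1) k.lt_succ_self hk).le
  have hpiece : ∀ k < n, EqOn η (fun _ => N (k + 1)) (Ioo (t k) (t (k + 1))) :=
    fun k hk x hx => hη (k + 1) k.succ_pos hk x hx.1.le hx.2
  have hR : ∀ k ≤ n, IntervalIntegrable (fun u => 1 / η u) volume 0 (t k) ∧
      cumHazard η (t k) = S k := fun k hk => by
    simpa [hS, Finset.sum_Icc_one_eq_sum_range] using
      cumHazard_breakpoint_eq_sum ht0 hmono hpiece hk
  have htn : 0 ≤ t n := by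
    rcases n.eq_zero_or_pos with rfl | hn
    · exact ht0.ge
    · exact ht0 ▸ (htmono 0 n hn le_rfl).le
  obtain ⟨htail_int, htail⟩ := integral_Ioi_firstCoal_of_eqOn ha₀
    (hN (n + 1) n.succ_pos le_rfl) htn (hR n le_rfl).1 fun x hx => hηlast x hx.le
  have hpieces := fun k (hk : k < n) => integral_firstCoal_of_eqOn_Ioo ha₀.ne'
    (hN (k + 1) k.succ_pos (by omega)).ne' (hR k hk.le).1 (hmono k hk) (hpiece k hk)
  change ∫ x in Ioi 0, x * (a / η x) * exp (-(a * cumHazard η x)) = _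
  rw [← ht0, integral_Ioi_eq_sum_intervalIntegral_add (fun k hk => (hpieces k hk).1) htail_int,
    Finset.sum_congr rfl fun k hk => (hpieces k (Finset.mem_range.mp hk)).2, htail,
    sum_range_piece_telescope, ht0, zero_mul, zero_add, Finset.sum_Icc_one_eq_sum_range,
    (hR n le_rfl).2]
  congr 2
  refine Finset.sum_congr rfl fun k hk => ?_
  have hkn := Finset.mem_range.mp hk
  rw [(hR k hkn.le).2, (hR (k + 1) hkn).2, Nat.add_sub_cancel]
end

section
/- Fix τ > 0 and let ε: (1,∞) → (0,∞) be a function of s such that limsup_{s→∞} max{(ε(s)/s)·e^{τ/ε(s)}, ε(s)} < ∞. Then for every p > 0, ε(s)·s^p → ∞ as s → ∞. -/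
/-!
With `x = τ / ε(s)` the hypothesis reads `eˣ / x ≤ (C / τ) s`, and since `x < 2 e^{x/2}` this
forces `x ≤ 2 log (2 C s / τ)`. Hence `τ / ε(s) = o(s^p)`, i.e. `ε(s) s^p → ∞`.
-/

open Filter Asymptotics Real Topology

lemma le_two_mul_log_of_exp_div_le {x M : ℝ} (hx : 0 < x) (h : exp x / x ≤ M) :
    x ≤ 2 * log (2 * M) := by
  have hM : 0 < M := (div_pos (exp_pos x) hx).trans_le h
  have hx_lt : x < 2 * exp (x / 2) := by linarith [add_one_le_exp (x / 2)]
  have hsq : exp (x / 2) * exp (x / 2) ≤ 2 * M * exp (x / 2) := by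
    rw [← exp_add, add_halves]
    calc exp x ≤ M * x := (div_le_iff₀ hx).mp h
      _ ≤ M * (2 * exp (x / 2)) := by gcongr
      _ = 2 * M * exp (x / 2) := by ring
  have hexp : exp (x / 2) ≤ 2 * M := le_of_mul_le_mul_right hsq (exp_pos _)
  linarith [(le_log_iff_exp_le (by positivity)).mpr hexp]

lemma isLittleO_log_const_mul_rpow_atTop (c : ℝ) {p : ℝ} (hp : 0 < p) :
    (fun s => log (c * s)) =o[atTop] fun s => s ^ p := by
  rcases eq_or_ne c 0 with rfl | hc
  · simp
  have hsplit : (fun s => log c + log s) =ᶠ[atTop] fun s => log (c * s) := by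
    filter_upwards [eventually_ne_atTop 0] with s hs
    rw [log_mul hc hs]
  have hlog := isLittleO_log_rpow_atTop hp
  exact ((isLittleO_const_log_atTop.trans hlog).add hlog).congr' hsplit EventuallyEq.rfl

lemma tendsto_div_atTop_of_isLittleO {α : Type*} {l : Filter α} {f g : α → ℝ} (h : f =o[l] g)
    (hf : ∀ᶠ x in l, 0 < f x) (hg : ∀ᶠ x in l, 0 < g x) :
    Tendsto (fun x => g x / f x) l atTop := by
  have hratio : Tendsto (fun x => f x / g x) l (𝓝[>] 0) :=
    tendsto_nhdsWithin_iff.mpr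
      ⟨h.tendsto_div_nhds_zero, by filter_upwards [hf, hg] with x using div_pos⟩
  exact hratio.inv_tendsto_nhdsGT_zero.congr fun x => inv_div (f x) (g x)

/-- If both `ε(s)` and `(ε(s)/s) e^{τ/ε(s)}` remain bounded as `s → ∞`, then
`ε(s) s^p → ∞` for every `p > 0`. -/
theorem eps_poly_divergence (τ : ℝ) (hτ : 0 < τ)
    (ε : ℝ → ℝ) (hεpos : ∀ s, 1 < s → 0 < ε s)
    (hbdd : ∃ C : ℝ, ∀ᶠ s in atTop,
      max ((ε s / s) * Real.exp (τ / ε s)) (ε s) ≤ C) :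
    ∀ p : ℝ, 0 < p → Tendsto (fun s => ε s * s ^ p) atTop atTop := by
  obtain ⟨C, hC⟩ := hbdd
  intro p hp
  have hε : ∀ᶠ s in atTop, 0 < ε s := (eventually_gt_atTop 1).mono hεpos
  have hx_le_log : ∀ᶠ s in atTop, τ / ε s ≤ 2 * log (2 * C / τ * s) := by
    filter_upwards [hC, hε, eventually_gt_atTop 0] with s hCs hεs hs
    have hbound : exp (τ / ε s) / (τ / ε s) ≤ C / τ * s :=
      calc exp (τ / ε s) / (τ / ε s) = (ε s / s * exp (τ / ε s)) * (s / τ) := by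
              field_simp
        _ ≤ C * (s / τ) := by gcongr; exact (le_max_left _ _).trans hCs
        _ = C / τ * s := by ring
    convert le_two_mul_log_of_exp_div_le (div_pos hτ hεs) hbound using 3
    ring
  have hx_isLittleO : (fun s => τ / ε s) =o[atTop] fun s => s ^ p := by
    refine IsBigO.trans_isLittleO (IsBigO.of_bound 2 ?_)
      (isLittleO_log_const_mul_rpow_atTop (2 * C / τ) hp)
    filter_upwards [hx_le_log, hε] with s hs hεs
    rw [norm_of_nonneg (div_pos hτ hεs).le, norm_of_nonneg (by linarith [div_pos hτ hεs])]
    exact hs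
  have hdiv := tendsto_div_atTop_of_isLittleO hx_isLittleO (hε.mono fun s => div_pos hτ)
    ((eventually_gt_atTop 0).mono fun s hs => rpow_pos_of_pos hs p)
  refine (hdiv.const_mul_atTop hτ).congr' ?_
  filter_upwards [hε] with s hεs
  field_simp
end

section
/- Fix τ > 0 and suppose ε: (1,∞) → (0,∞) satisfies limsup_{s→∞} max{(ε(s)/s)·e^{τ/ε(s)}, ε(s)} < ∞ and liminf_{s→∞} ε(s)·(log s)/τ = q with 0 < q < 1. Then limsup_{s→∞} (ε(s)/s)·e^{τ/ε(s)} = ∞, a contradiction; hence liminf_{s→∞} ε(s)·(log s)/τ ≥ 1, i.e., ε(s) ≥ τ/log s for all sufficiently large s along the liminf. -/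
/-!
Along the liminf the exponent `τ / ε(s)` exceeds `(log s) / p` for some `p < 1`, and since
`x ↦ eˣ / x` increases on `[1, ∞)` this forces `(ε(s)/s) e^{τ/ε(s)} ≥ τ p s^{1/p - 1} / log s`,
which is unbounded.
-/

open Filter Real

theorem exp_div_self_le_exp_div_self {a x : ℝ} (ha : 1 ≤ a) (hax : a ≤ x) :
    exp a / a ≤ exp x / x := by
  have hexp : exp a * (x - a + 1) ≤ exp x := by
    calc exp a * (x - a + 1) ≤ exp a * exp (x - a) := by gcongr; linarith [add_one_le_exp (x - a)]
      _ = exp x := by rw [← exp_add, add_sub_cancel]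
  rw [div_le_div_iff₀ (by linarith) (by linarith)]
  nlinarith [exp_pos a, mul_nonneg (sub_nonneg.2 ha) (sub_nonneg.2 hax)]

theorem tendsto_rpow_div_log_atTop {r : ℝ} (hr : 0 < r) :
    Tendsto (fun s : ℝ => s ^ r / log s) atTop atTop := by
  refine ((tendsto_exp_mul_div_rpow_atTop 1 r hr).comp tendsto_log_atTop).congr' ?_
  filter_upwards [eventually_gt_atTop 0] with s hs
  simp [rpow_def_of_pos hs, mul_comm]

theorem mul_rpow_div_log_le_div_mul_exp {τ e s p : ℝ} (hτ : 0 < τ) (he : 0 < e) (hs : 1 < s)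
    (hp : 0 < p) (hps : p ≤ log s) (h : e * log s ≤ p * τ) :
    τ * p * (s ^ (p⁻¹ - 1) / log s) ≤ e / s * exp (τ / e) := by
  have hlog : 0 < log s := log_pos hs
  have ha : 1 ≤ log s / p := (one_le_div hp).2 hps
  have hax : log s / p ≤ τ / e := by rw [div_le_div_iff₀ hp he]; linarith
  have hrpow : s ^ (p⁻¹ - 1) = exp (log s / p) / s := by
    rw [rpow_sub_one (by linarith), rpow_def_of_pos (by linarith), ← div_eq_mul_inv (log s)]
  calc τ * p * (s ^ (p⁻¹ - 1) / log s) = τ / s * (exp (log s / p) / (log s / p)) := by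
        rw [hrpow]; field_simp
    _ ≤ τ / s * (exp (τ / e) / (τ / e)) :=
        mul_le_mul_of_nonneg_left (exp_div_self_le_exp_div_self ha hax) (by positivity)
    _ = e / s * exp (τ / e) := by field_simp

/-- A real `liminf` that is not cobounded takes the junk value `sSup ∅ = 0` or `sSup univ = 0`. -/
theorem frequently_lt_of_liminf_lt_of_liminf_ne_zero {α : Type*} {l : Filter α} {f : α → ℝ}
    {b : ℝ} (h0 : liminf f l ≠ 0) (h : liminf f l < b) : ∃ᶠ x in l, f x < b := by
  refine frequently_lt_of_liminf_lt ?_ h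
  by_contra hcob
  rw [liminf_eq] at h0
  exact h0 (sSup_of_not_bddAbove fun ⟨c, hc⟩ => hcob ⟨c, fun a ha => hc ha⟩)

/-- If both `ε(s)` and `(ε(s)/s) e^{τ/ε(s)}` remain bounded as `s → ∞`, then it is
impossible that `liminf_{s→∞} ε(s) (log s) / τ = q` for some `0 < q < 1`
(for such `q` one would get `limsup (ε(s)/s) e^{τ/ε(s)} = ∞`, a contradiction). -/
theorem eps_liminf_contradiction (τ : ℝ) (hτ : 0 < τ)
    (ε : ℝ → ℝ) (hεpos : ∀ s, 1 < s → 0 < ε s)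
    (hbdd : ∃ C : ℝ, ∀ᶠ s in atTop,
      max ((ε s / s) * Real.exp (τ / ε s)) (ε s) ≤ C)
    (q : ℝ) (hq0 : 0 < q) (hq1 : q < 1)
    (hliminf : Filter.liminf (fun s => ε s * Real.log s / τ) atTop = q) :
    False := by
  obtain ⟨C, hC⟩ := hbdd
  obtain ⟨p, hqp, hp1⟩ := exists_between hq1
  have hp : 0 < p := hq0.trans hqp
  have hsmall : ∃ᶠ s in atTop, ε s * log s / τ < p :=
    frequently_lt_of_liminf_lt_of_liminf_ne_zero (hliminf ▸ hq0.ne') (hliminf ▸ hqp)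
  have hlarge : ∀ᶠ s in atTop, C < τ * p * (s ^ (p⁻¹ - 1) / log s) :=
    ((tendsto_rpow_div_log_atTop (sub_pos.2 ((one_lt_inv₀ hp).2 hp1))).const_mul_atTop
      (by positivity)).eventually_gt_atTop C
  obtain ⟨s, hs_small, hCs, hs_large, hs1, hps⟩ := (hsmall.and_eventually (hC.and (hlarge.and
    ((eventually_gt_atTop 1).and (tendsto_log_atTop.eventually_ge_atTop p))))).exists
  have hlower := mul_rpow_div_log_le_div_mul_exp hτ (hεpos s hs1) hs1 hp hps
    ((div_lt_iff₀ hτ).1 hs_small).le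
  linarith [(le_max_left _ _).trans hCs]
end

section
/- Let η, η′ be two piecewise-constant members of the family F_{I,J}: they agree on [0, t_I), on [t_I, ∞) they are non-decreasing step functions taking values in {h + kδ : 0 ≤ k ≤ J} with jumps of size δ only at the change points t_I < t_{I+1} < … < t_{I+J−1}, where h > 0, δ > 0, and the common minimum value over all t is ε = min_t η(t) = min_t η′(t) ≤ h. If η ≤ η′ pointwise on [t_I, ∞), then for every m ≥ 2, c_m^{(η′)} − c_m^{(η)} ≤ J·(δ/a_m)·e^{−a_m·τ_B/ε}, where τ_B = t_I − t_{I−1} and a_m = C(m,2). -/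
/-!
The integrand of `firstCoalTime η a` is `x` times the density `a/η(x) · S(x)` of the first
coalescence time, where `S(x) = exp (-a ∫₀ˣ 1/η)`. The two models share `S` on `[0, t_I]`, and
for `x ≥ t_I` we have `S(x) = S(t_I) · S_I(x)` with `S_I` the survival function started at `t_I`.
Integrating by parts, `∫_{t_I}^∞ x · (a/η) · S_I = t_I + ∫_{t_I}^∞ S_I`, and since after `t_I`
both models take values in `[h, h + Jδ]`, the last integral lies in `[h/a, (h + Jδ)/a]`. Hence
the difference of the expected times is at most `S(t_I) · Jδ/a`, and `S(t_I) ≤ exp (-a τ_B/ε)`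
because the bottleneck epoch alone contributes `τ_B/ε` to `∫₀^{t_I} 1/η`.
The step functions are only right-continuous, so the integration by parts uses right
derivatives. If `1/η` is not integrable on `[0, t_I]`, both expected times are the junk value `0`.
-/

/-- Expected waiting time to the first coalescence in a sample with pairwise rate `a`
under population size function `η`. -/
noncomputable def firstCoalTime (η : ℝ → ℝ) (a : ℝ) : ℝ :=
  ∫ x in Set.Ioi (0 : ℝ), x * (a / η x) * Real.exp (-(a * ∫ u in (0:ℝ)..x, 1 / η u))

open MeasureTheory Set Filter Topology

theorem integral_Ioi_of_hasDerivWithinAt_Ioi_of_tendsto {f f' : ℝ → ℝ} {a m : ℝ}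
    (hcont : ContinuousOn f (Ici a)) (hderiv : ∀ x ∈ Ioi a, HasDerivWithinAt f (f' x) (Ioi x) x)
    (f'int : IntegrableOn f' (Ioi a)) (hf : Tendsto f atTop (𝓝 m)) :
    ∫ x in Ioi a, f' x = m - f a := by
  refine tendsto_nhds_unique (intervalIntegral_tendsto_integral_Ioi a f'int tendsto_id) ?_
  refine (hf.sub_const _).congr' ?_
  filter_upwards [eventually_ge_atTop a] with x hx
  refine (intervalIntegral.integral_eq_sub_of_hasDeriv_right_of_le hx
    (hcont.mono Icc_subset_Ici_self) (fun y hy => hderiv y hy.1) ?_).symm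
  rw [intervalIntegrable_iff_integrableOn_Ioc_of_le hx]
  exact f'int.mono_set Ioc_subset_Ioi_self

section ExpDecay

variable {c : ℝ}

lemma exp_neg_mul_sub_eq (T x : ℝ) :
    Real.exp (-(c * (x - T))) = Real.exp (c * T) * Real.exp (-c * x) := by
  rw [← Real.exp_add]; ring_nf

lemma integrableOn_Ioi_exp_neg_mul_sub (hc : 0 < c) (T : ℝ) :
    IntegrableOn (fun x => Real.exp (-(c * (x - T)))) (Ioi T) := by
  simp_rw [exp_neg_mul_sub_eq]
  exact (exp_neg_integrableOn_Ioi T hc).const_mul _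

lemma integral_Ioi_exp_neg_mul_sub (hc : 0 < c) (T : ℝ) :
    ∫ x in Ioi T, Real.exp (-(c * (x - T))) = 1 / c := by
  simp_rw [exp_neg_mul_sub_eq]
  rw [integral_const_mul, integral_exp_mul_Ioi (neg_lt_zero.2 hc), mul_div_assoc',
    mul_neg, ← Real.exp_add]
  simp

lemma integrableOn_Ioi_mul_exp_neg_mul_sub (hc : 0 < c) {T : ℝ} (hT : 0 ≤ T) :
    IntegrableOn (fun x => x * Real.exp (-(c * (x - T)))) (Ioi T) := by
  have h := integrableOn_rpow_mul_exp_neg_mul_rpow (s := 1) (p := 1) (by norm_num) one_pos hc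
  simp only [Real.rpow_one] at h
  refine IntegrableOn.congr_fun (((h.mono_set (Ioi_subset_Ioi hT)).const_mul
    (Real.exp (c * T)))) (fun x _ => ?_) measurableSet_Ioi
  rw [exp_neg_mul_sub_eq]; ring

lemma tendsto_mul_exp_neg_mul_sub (hc : 0 < c) (T : ℝ) :
    Tendsto (fun x => x * Real.exp (-(c * (x - T)))) atTop (𝓝 0) := by
  have h := ((Real.tendsto_pow_mul_exp_neg_atTop_nhds_zero 1).comp
    (tendsto_id.const_mul_atTop hc)).const_mul (Real.exp (c * T) / c)
  rw [mul_zero] at h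
  refine h.congr fun x => ?_
  simp only [Function.comp_apply, id, pow_one, exp_neg_mul_sub_eq]
  field_simp

end ExpDecay

noncomputable def survival (η : ℝ → ℝ) (a s x : ℝ) : ℝ :=
  Real.exp (-(a * ∫ u in s..x, 1 / η u))

lemma survival_pos (η : ℝ → ℝ) (a s x : ℝ) : 0 < survival η a s x := Real.exp_pos _

section Survival

variable {η ζ : ℝ → ℝ} {a s t u : ℝ}

lemma survival_self (η : ℝ → ℝ) (a s : ℝ) : survival η a s s = 1 := by
  simp [survival]

lemma firstCoalTime_eq_integral_survival (η : ℝ → ℝ) (a : ℝ) :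
    firstCoalTime η a = ∫ x in Ioi 0, x * (a / η x) * survival η a 0 x := rfl

lemma intervalIntegrable_one_div_congr (hst : s ≤ t) (h : EqOn η ζ (Ioo s t)) :
    IntervalIntegrable (fun x => 1 / η x) volume s t ↔
      IntervalIntegrable (fun x => 1 / ζ x) volume s t :=
  intervalIntegrable_congr_uIoo fun x hx => by
    rw [uIoo_of_le hst] at hx
    simp only [h hx]

lemma survival_mul (hst : IntervalIntegrable (fun x => 1 / η x) volume s t)
    (htu : IntervalIntegrable (fun x => 1 / η x) volume t u) :
    survival η a s t * survival η a t u = survival η a s u := by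
  rw [survival, survival, survival, ← Real.exp_add,
    ← intervalIntegral.integral_add_adjacent_intervals hst htu]
  ring_nf

lemma survival_congr_of_eqOn_Ioo (hst : s ≤ t) (h : EqOn η ζ (Ioo s t)) :
    survival η a s t = survival ζ a s t := by
  rw [survival, survival, intervalIntegral.integral_congr_Ioo_of_le (g := fun x => 1 / ζ x) hst
    fun x hx => by simp only [h hx]]

lemma survival_le_one (hst : s ≤ t) (ha : 0 ≤ a) (hpos : ∀ x ∈ Ioo s t, 0 < η x) :
    survival η a s t ≤ 1 := by
  refine Real.exp_le_one_iff.2 (neg_nonpos.2 (mul_nonneg ha ?_))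
  rw [intervalIntegral.integral_of_le hst, integral_Ioc_eq_integral_Ioo]
  exact setIntegral_nonneg measurableSet_Ioo fun x hx => (one_div_pos.2 (hpos x hx)).le

lemma survival_le_of_eqOn_Ico {P T ε : ℝ} (ha : 0 ≤ a) (hP : 0 ≤ P)
    (hPT : P ≤ T) (hpos : ∀ x ∈ Ioo 0 T, 0 < η x)
    (hint : IntervalIntegrable (fun x => 1 / η x) volume 0 T)
    (hε : EqOn η (fun _ => ε) (Ico P T)) :
    survival η a 0 T ≤ Real.exp (-(a * (T - P) / ε)) := by
  have hPmem : P ∈ uIcc 0 T := by rw [uIcc_of_le (hP.trans hPT)]; exact ⟨hP, hPT⟩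
  rw [← survival_mul (hint.mono_set (uIcc_subset_uIcc left_mem_uIcc hPmem))
    (hint.mono_set (uIcc_subset_uIcc hPmem right_mem_uIcc)),
    survival_congr_of_eqOn_Ioo hPT (hε.mono Ioo_subset_Ico_self)]
  have hbot : survival (fun _ => ε) a P T = Real.exp (-(a * (T - P) / ε)) := by
    simp only [survival, intervalIntegral.integral_const, smul_eq_mul]
    ring_nf
  rw [hbot]
  exact mul_le_of_le_one_left (Real.exp_pos _).le
    (survival_le_one hP ha fun x hx => hpos x ⟨hx.1, hx.2.trans_le hPT⟩)

end Survival

structure BoundedRightContinuousFrom (N : ℝ → ℝ) (T lo hi : ℝ) : Prop where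
  measurable : Measurable N
  lo_le : ∀ x, lo ≤ N x
  le_hi : ∀ x, N x ≤ hi
  continuousWithinAt_Ici : ∀ x, T ≤ x → ContinuousWithinAt N (Ici x) x

namespace BoundedRightContinuousFrom

variable {N : ℝ → ℝ} {T lo hi a : ℝ}

lemma pos (hN : BoundedRightContinuousFrom N T lo hi) (hlo : 0 < lo) (x : ℝ) : 0 < N x :=
  hlo.trans_le (hN.lo_le x)

lemma intervalIntegrable_one_div (hN : BoundedRightContinuousFrom N T lo hi) (hlo : 0 < lo)
    (p q : ℝ) : IntervalIntegrable (fun u => 1 / N u) volume p q := by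
  refine (intervalIntegrable_const (c := 1 / lo)).mono_fun'
    (measurable_const.div hN.measurable).aestronglyMeasurable (ae_of_all _ fun u => ?_)
  show ‖1 / N u‖ ≤ 1 / lo
  rw [Real.norm_of_nonneg (one_div_pos.2 (hN.pos hlo u)).le]
  exact one_div_le_one_div_of_le hlo (hN.lo_le u)

lemma integral_one_div_mem (hN : BoundedRightContinuousFrom N T lo hi) (hlo : 0 < lo) {x : ℝ}
    (hx : T ≤ x) :
    (x - T) / hi ≤ ∫ u in T..x, 1 / N u ∧ ∫ u in T..x, 1 / N u ≤ (x - T) / lo := by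
  have hint := hN.intervalIntegrable_one_div hlo T x
  constructor
  · have := intervalIntegral.integral_mono_on hx intervalIntegrable_const hint
      fun u _ => one_div_le_one_div_of_le (hN.pos hlo u) (hN.le_hi u)
    simpa [div_eq_mul_one_div (x - T)] using this
  · have := intervalIntegral.integral_mono_on hx hint intervalIntegrable_const
      fun u _ => one_div_le_one_div_of_le hlo (hN.lo_le u)
    simpa [div_eq_mul_one_div (x - T)] using this

lemma continuous_survival (hN : BoundedRightContinuousFrom N T lo hi) (hlo : 0 < lo) :
    Continuous (survival N a T) :=
  Real.continuous_exp.comp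
    ((continuous_const.mul (intervalIntegral.continuous_primitive
      (hN.intervalIntegrable_one_div hlo) T)).neg)

lemma hasDerivWithinAt_survival (hN : BoundedRightContinuousFrom N T lo hi) (hlo : 0 < lo)
    {x : ℝ} (hx : T ≤ x) :
    HasDerivWithinAt (survival N a T) (-(a / N x) * survival N a T x) (Ioi x) x := by
  have hΛ : HasDerivWithinAt (fun y => ∫ u in T..y, 1 / N u) (1 / N x) (Ici x) x :=
    intervalIntegral.integral_hasDerivWithinAt_right (hN.intervalIntegrable_one_div hlo T x)
      (measurable_const.div hN.measurable).stronglyMeasurable.stronglyMeasurableAtFilter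
      ((continuousWithinAt_const.div (hN.continuousWithinAt_Ici x hx)
        (hN.pos hlo x).ne').mono Ioi_subset_Ici_self)
  have hexp : HasDerivWithinAt (fun y => -(a * ∫ u in T..y, 1 / N u)) (-(a * (1 / N x)))
      (Ici x) x := (hΛ.const_mul a).neg
  refine (hexp.exp.mono Ioi_subset_Ici_self).congr_deriv ?_
  simp only [survival]
  ring

lemma survival_mem (hN : BoundedRightContinuousFrom N T lo hi) (hlo : 0 < lo) (ha : 0 ≤ a)
    {x : ℝ} (hx : T ≤ x) :
    Real.exp (-(a / lo * (x - T))) ≤ survival N a T x ∧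
      survival N a T x ≤ Real.exp (-(a / hi * (x - T))) := by
  obtain ⟨h₁, h₂⟩ := hN.integral_one_div_mem hlo hx
  constructor <;> refine Real.exp_le_exp.2 (neg_le_neg ?_) <;> rw [mul_comm_div]
  · exact mul_le_mul_of_nonneg_left h₂ ha
  · exact mul_le_mul_of_nonneg_left h₁ ha

lemma integrableOn_survival (hN : BoundedRightContinuousFrom N T lo hi) (hlo : 0 < lo)
    (ha : 0 < a) : IntegrableOn (survival N a T) (Ioi T) := by
  have hhi : 0 < hi := (hN.pos hlo T).trans_le (hN.le_hi T)
  refine (integrableOn_Ioi_exp_neg_mul_sub (div_pos ha hhi) T).mono'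
    (hN.continuous_survival hlo).aestronglyMeasurable.restrict
    ((ae_restrict_iff' measurableSet_Ioi).2 (ae_of_all _ fun x hx => ?_))
  rw [Real.norm_of_nonneg (survival_pos _ _ _ _).le]
  exact (hN.survival_mem hlo ha.le hx.le).2

lemma integral_survival_mem (hN : BoundedRightContinuousFrom N T lo hi) (hlo : 0 < lo)
    (ha : 0 < a) :
    lo / a ≤ ∫ x in Ioi T, survival N a T x ∧ ∫ x in Ioi T, survival N a T x ≤ hi / a := by
  have hhi : 0 < hi := (hN.pos hlo T).trans_le (hN.le_hi T)
  have hS := hN.integrableOn_survival hlo ha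
  constructor
  · have := setIntegral_mono_on (integrableOn_Ioi_exp_neg_mul_sub (div_pos ha hlo) T) hS
      measurableSet_Ioi fun x hx => (hN.survival_mem hlo ha.le (le_of_lt hx)).1
    rwa [integral_Ioi_exp_neg_mul_sub (div_pos ha hlo), one_div_div] at this
  · have := setIntegral_mono_on hS (integrableOn_Ioi_exp_neg_mul_sub (div_pos ha hhi) T)
      measurableSet_Ioi fun x hx => (hN.survival_mem hlo ha.le (le_of_lt hx)).2
    rwa [integral_Ioi_exp_neg_mul_sub (div_pos ha hhi), one_div_div] at this

lemma norm_mul_div_mul_survival_le (hN : BoundedRightContinuousFrom N T lo hi) (hlo : 0 < lo)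
    (hT : 0 ≤ T) (ha : 0 < a) {x : ℝ} (hx : T ≤ x) :
    ‖x * (a / N x) * survival N a T x‖ ≤ a / lo * (x * Real.exp (-(a / hi * (x - T)))) := by
  have hx0 : 0 ≤ x := hT.trans hx
  have hS := hN.survival_mem hlo ha.le hx
  rw [norm_mul, norm_mul, Real.norm_of_nonneg hx0, Real.norm_of_nonneg
    (div_pos ha (hN.pos hlo x)).le, Real.norm_of_nonneg (survival_pos _ _ _ _).le]
  calc x * (a / N x) * survival N a T x ≤ x * (a / lo) * Real.exp (-(a / hi * (x - T))) := by
        gcongr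
        exacts [(survival_pos _ _ _ _).le, hN.lo_le x, hS.2]
    _ = _ := by ring

lemma integrableOn_mul_div_mul_survival (hN : BoundedRightContinuousFrom N T lo hi)
    (hlo : 0 < lo) (hT : 0 ≤ T) (ha : 0 < a) :
    IntegrableOn (fun x => x * (a / N x) * survival N a T x) (Ioi T) := by
  have hhi : 0 < hi := (hN.pos hlo T).trans_le (hN.le_hi T)
  refine ((integrableOn_Ioi_mul_exp_neg_mul_sub (div_pos ha hhi) hT).const_mul (a / lo)).mono'
    ((measurable_id.mul (measurable_const.div hN.measurable)).aestronglyMeasurable.mul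
      (hN.continuous_survival hlo).aestronglyMeasurable).restrict
    ((ae_restrict_iff' measurableSet_Ioi).2 (ae_of_all _ fun x hx =>
      hN.norm_mul_div_mul_survival_le hlo hT ha hx.le))

lemma integral_mul_div_mul_survival (hN : BoundedRightContinuousFrom N T lo hi) (hlo : 0 < lo)
    (hT : 0 ≤ T) (ha : 0 < a) :
    ∫ x in Ioi T, x * (a / N x) * survival N a T x = T + ∫ x in Ioi T, survival N a T x := by
  have hhi : 0 < hi := (hN.pos hlo T).trans_le (hN.le_hi T)
  have hS := hN.continuous_survival (a := a) hlo
  have hlim : Tendsto (fun y => y * survival N a T y) atTop (𝓝 0) := by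
    refine squeeze_zero' ?_ ?_ (tendsto_mul_exp_neg_mul_sub (div_pos ha hhi) T)
    · filter_upwards [eventually_ge_atTop T] with y hy
      exact mul_nonneg (hT.trans hy) (survival_pos _ _ _ _).le
    · filter_upwards [eventually_ge_atTop T] with y hy
      exact mul_le_mul_of_nonneg_left (hN.survival_mem hlo ha.le hy).2 (hT.trans hy)
  have hprim : Tendsto (fun y => ∫ u in T..y, survival N a T u) atTop
      (𝓝 (∫ x in Ioi T, survival N a T x)) :=
    intervalIntegral_tendsto_integral_Ioi T (hN.integrableOn_survival hlo ha) tendsto_id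
  have hderiv : ∀ x ∈ Ioi T, HasDerivWithinAt
      (fun y => -(y * survival N a T y) + ∫ u in T..y, survival N a T u)
      (x * (a / N x) * survival N a T x) (Ioi x) x := by
    intro x hx
    have hprod := (hasDerivWithinAt_id x (Ioi x)).mul
      (hN.hasDerivWithinAt_survival (a := a) hlo (le_of_lt hx))
    have hint := intervalIntegral.integral_hasDerivAt_right (hS.intervalIntegrable T x)
      (hS.stronglyMeasurableAtFilter _ _) hS.continuousAt
    refine (hprod.neg.add hint.hasDerivWithinAt).congr_deriv ?_
    simp only [id]
    ring
  have hcont : Continuous fun y => -(y * survival N a T y) + ∫ u in T..y, survival N a T u :=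
    (continuous_id.mul hS).neg.add
      (intervalIntegral.continuous_primitive (fun p q => hS.intervalIntegrable p q) T)
  rw [integral_Ioi_of_hasDerivWithinAt_Ioi_of_tendsto hcont.continuousOn hderiv
    (hN.integrableOn_mul_div_mul_survival hlo hT ha) ((hlim.neg.add hprim).congr fun y => rfl),
    survival_self, intervalIntegral.integral_same]
  ring

lemma integral_mul_div_mul_survival_mem (hN : BoundedRightContinuousFrom N T lo hi)
    (hlo : 0 < lo) (hT : 0 ≤ T) (ha : 0 < a) :
    T + lo / a ≤ ∫ x in Ioi T, x * (a / N x) * survival N a T x ∧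
      ∫ x in Ioi T, x * (a / N x) * survival N a T x ≤ T + hi / a := by
  rw [hN.integral_mul_div_mul_survival hlo hT ha]
  obtain ⟨h₁, h₂⟩ := hN.integral_survival_mem hlo ha
  constructor <;> linarith

end BoundedRightContinuousFrom

section FirstCoalTime

variable {η η' N N' : ℝ → ℝ} {T lo hi a : ℝ}

lemma integrableOn_Ioc_mul_div_mul_survival (hT : 0 ≤ T) (ha : 0 ≤ a)
    (hpos : ∀ x ∈ Ioo 0 T, 0 < η x) (hint : IntervalIntegrable (fun x => 1 / η x) volume 0 T) :
    IntegrableOn (fun x => x * (a / η x) * survival η a 0 x) (Ioc 0 T) := by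
  have hIoc : IntegrableOn (fun x => 1 / η x) (Ioc 0 T) :=
    (intervalIntegrable_iff_integrableOn_Ioc_of_le hT).1 hint
  have hS : ContinuousOn (survival η a 0) (Icc 0 T) := by
    have := intervalIntegral.continuousOn_primitive_interval' hint left_mem_uIcc
    rw [uIcc_of_le hT] at this
    exact Real.continuous_exp.comp_continuousOn (this.const_smul a).neg
  have hmeas : AEStronglyMeasurable (fun x => x * (a / η x) * survival η a 0 x)
      (volume.restrict (Ioc 0 T)) := by
    simp_rw [div_eq_mul_one_div a]
    exact (aestronglyMeasurable_id.mul (hIoc.aestronglyMeasurable.const_mul a)).mul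
      ((hS.aestronglyMeasurable measurableSet_Icc).mono_measure
        (Measure.restrict_mono Ioc_subset_Icc_self le_rfl))
  refine (hIoc.const_mul (T * a)).mono' hmeas ?_
  rw [← restrict_Ioo_eq_restrict_Ioc]
  refine ae_restrict_of_forall_mem measurableSet_Ioo fun x hx => ?_
  have hS1 : survival η a 0 x ≤ 1 :=
    survival_le_one hx.1.le ha fun y hy => hpos y ⟨hy.1, hy.2.trans hx.2⟩
  have hηx := hpos x hx
  rw [norm_mul, norm_mul, Real.norm_of_nonneg hx.1.le, Real.norm_of_nonneg (by positivity),
    Real.norm_of_nonneg (survival_pos _ _ _ _).le]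
  calc x * (a / η x) * survival η a 0 x ≤ T * (a / η x) * 1 := by
        gcongr
        exacts [(survival_pos _ _ _ _).le, hx.2.le]
    _ = T * a * (1 / η x) := by ring

lemma firstCoalTime_eq_add (hT : 0 ≤ T) (ha : 0 < a) (hpos : ∀ x ∈ Ioo 0 T, 0 < η x)
    (hint : IntervalIntegrable (fun x => 1 / η x) volume 0 T)
    (hN : BoundedRightContinuousFrom N T lo hi) (hlo : 0 < lo) (hηN : EqOn η N (Ici T)) :
    firstCoalTime η a = (∫ x in Ioc 0 T, x * (a / η x) * survival η a 0 x) +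
      survival η a 0 T * ∫ x in Ioi T, x * (a / N x) * survival N a T x := by
  have htail : EqOn (fun x => survival η a 0 T * (x * (a / N x) * survival N a T x))
      (fun x => x * (a / η x) * survival η a 0 x) (Ioi T) := by
    intro x hx
    have hTx : EqOn η N (Ioo T x) := hηN.mono fun y hy => mem_Ici.2 (le_of_lt hy.1)
    dsimp only
    rw [← survival_mul hint ((intervalIntegrable_one_div_congr (le_of_lt hx) hTx).2
        (hN.intervalIntegrable_one_div hlo T x)), survival_congr_of_eqOn_Ioo (le_of_lt hx) hTx,
      hηN (mem_Ici.2 (le_of_lt hx))]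
    ring
  rw [firstCoalTime_eq_integral_survival, ← Ioc_union_Ioi_eq_Ioi hT,
    setIntegral_union (Ioc_disjoint_Ioi le_rfl) measurableSet_Ioi
      (integrableOn_Ioc_mul_div_mul_survival hT ha.le hpos hint)
      (IntegrableOn.congr_fun ((hN.integrableOn_mul_div_mul_survival hlo hT ha).const_mul _)
        htail measurableSet_Ioi),
    ← setIntegral_congr_fun measurableSet_Ioi htail, integral_const_mul]

lemma firstCoalTime_eq_zero_of_not_intervalIntegrable (hT : 0 ≤ T) (ha : 0 < a)
    (hint : ¬ IntervalIntegrable (fun x => 1 / η x) volume 0 T)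
    (hN : BoundedRightContinuousFrom N T lo hi) (hlo : 0 < lo) (hηN : EqOn η N (Ici T)) :
    firstCoalTime η a = 0 := by
  have hhi : 0 < hi := (hN.pos hlo T).trans_le (hN.le_hi T)
  refine integral_undef fun hg => ?_
  set R := max T 1
  -- past `T` the integral `∫ 0..x, 1/η` takes the junk value `0`, so the survival factor is `1`
  have hbound : ∀ x ∈ Ioi R, ‖a / hi‖ ≤ x * (a / η x) * survival η a 0 x := by
    intro x hx
    have hTx : T ≤ x := (le_max_left T 1).trans hx.le
    have hS : survival η a 0 x = 1 := by
      rw [survival, intervalIntegral.integral_undef fun h' =>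
        hint (h'.mono_set (uIcc_subset_uIcc left_mem_uIcc
          (by rw [uIcc_of_le (hT.trans hTx)]; exact ⟨hT, hTx⟩)))]
      simp
    rw [hS, mul_one, hηN hTx, Real.norm_of_nonneg (div_pos ha hhi).le]
    calc a / hi ≤ a / N x := div_le_div_of_nonneg_left ha.le (hN.pos hlo x) (hN.le_hi x)
      _ ≤ x * (a / N x) :=
        le_mul_of_one_le_left (div_pos ha (hN.pos hlo x)).le ((le_max_right T 1).trans hx.le)
  have hconst : IntegrableOn (fun _ => a / hi) (Ioi R) :=
    (IntegrableOn.mono_set hg (Ioi_subset_Ioi (hT.trans (le_max_left T 1)))).mono'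
      aestronglyMeasurable_const (ae_restrict_of_forall_mem measurableSet_Ioi hbound)
  rw [integrableOn_const_iff] at hconst
  simp [(div_pos ha hhi).ne'] at hconst

lemma firstCoalTime_sub_le (hT : 0 ≤ T) (ha : 0 < a) (hpos : ∀ x ∈ Ioo 0 T, 0 < η x)
    (hint : IntervalIntegrable (fun x => 1 / η x) volume 0 T) (hagree : EqOn η η' (Ioo 0 T))
    (hN : BoundedRightContinuousFrom N T lo hi) (hN' : BoundedRightContinuousFrom N' T lo hi)
    (hlo : 0 < lo) (hηN : EqOn η N (Ici T)) (hη'N' : EqOn η' N' (Ici T)) :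
    firstCoalTime η' a - firstCoalTime η a ≤ survival η a 0 T * ((hi - lo) / a) := by
  have hint' := (intervalIntegrable_one_div_congr hT hagree).1 hint
  have hIoc : ∫ x in Ioc 0 T, x * (a / η' x) * survival η' a 0 x =
      ∫ x in Ioc 0 T, x * (a / η x) * survival η a 0 x := by
    rw [integral_Ioc_eq_integral_Ioo, integral_Ioc_eq_integral_Ioo]
    refine setIntegral_congr_fun measurableSet_Ioo fun x hx => ?_
    rw [hagree hx, survival_congr_of_eqOn_Ioo hx.1.le
      (hagree.symm.mono (Ioo_subset_Ioo_right hx.2.le))]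
  rw [firstCoalTime_eq_add hT ha hpos hint hN hlo hηN,
    firstCoalTime_eq_add hT ha (fun x hx => hagree hx ▸ hpos x hx) hint' hN' hlo hη'N', hIoc,
    survival_congr_of_eqOn_Ioo hT hagree.symm]
  have h₁ := (hN.integral_mul_div_mul_survival_mem hlo hT ha).1
  have h₂ := (hN'.integral_mul_div_mul_survival_mem hlo hT ha).2
  have hS := survival_pos η a 0 T
  calc _ = survival η a 0 T * ((∫ x in Ioi T, x * (a / N' x) * survival N' a T x) -
        ∫ x in Ioi T, x * (a / N x) * survival N a T x) := by ring
    _ ≤ survival η a 0 T * ((hi - lo) / a) := by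
        gcongr
        rw [sub_div]
        linarith

end FirstCoalTime

noncomputable def stepIndex (s : ℕ → ℝ) (n : ℕ) (x : ℝ) : ℕ :=
  Nat.findGreatest (fun j => s j ≤ x) n

section StepIndex

variable {s : ℕ → ℝ} {n : ℕ}

lemma stepIndex_le (x : ℝ) : stepIndex s n x ≤ n := Nat.findGreatest_le n

lemma monotone_stepIndex : Monotone (stepIndex s n) := fun _ _ hxy =>
  Nat.findGreatest_mono (fun _ hj => hj.trans hxy) le_rfl

lemma stepIndex_eventuallyEq (hs : MonotoneOn s (Iic n)) (x : ℝ) :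
    stepIndex s n =ᶠ[𝓝[≥] x] fun _ => stepIndex s n x := by
  rcases (stepIndex_le x).eq_or_lt with hj | hj
  · filter_upwards [self_mem_nhdsWithin] with y hy
    exact le_antisymm ((stepIndex_le y).trans hj.ge) (monotone_stepIndex hy)
  · have hx : x < s (stepIndex s n x + 1) :=
      lt_of_not_ge (Nat.findGreatest_is_greatest (Nat.lt_succ_self _) hj)
    filter_upwards [Ico_mem_nhdsGE hx] with y hy
    refine le_antisymm ?_ (monotone_stepIndex hy.1)
    by_contra! hlt
    have hy' : s (stepIndex s n y) ≤ y := Nat.findGreatest_of_ne_zero rfl (Nat.ne_zero_of_lt hlt)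
    have hle : s (stepIndex s n x + 1) ≤ s (stepIndex s n y) :=
      hs (by simp only [mem_Iic]; omega) (stepIndex_le y) hlt
    linarith [hy.2]

lemma eqOn_comp_stepIndex {ζ : ℝ → ℝ} {v : ℕ → ℝ}
    (hstep : ∀ j < n, ∀ x, s j ≤ x → x < s (j + 1) → ζ x = v j)
    (hlast : ∀ x, s n ≤ x → ζ x = v n) : EqOn ζ (fun x => v (stepIndex s n x)) (Ici (s 0)) := by
  intro x hx
  dsimp only
  have hj : s (stepIndex s n x) ≤ x :=
    Nat.findGreatest_spec (P := fun j => s j ≤ x) (Nat.zero_le n) hx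
  rcases (stepIndex_le x).eq_or_lt with hn | hn
  · rw [hn] at hj ⊢
    exact hlast x hj
  · exact hstep _ hn x hj
      (lt_of_not_ge (Nat.findGreatest_is_greatest (Nat.lt_succ_self _) hn))

lemma boundedRightContinuousFrom_comp_stepIndex {v : ℕ → ℝ} {lo hi : ℝ}
    (hs : MonotoneOn s (Iic n)) (hv : ∀ j, v j ∈ Icc lo hi) (T : ℝ) :
    BoundedRightContinuousFrom (fun x => v (stepIndex s n x)) T lo hi where
  measurable := measurable_from_nat.comp monotone_stepIndex.measurable
  lo_le _ := (hv _).1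
  le_hi _ := (hv _).2
  continuousWithinAt_Ici x _ := continuousWithinAt_const.congr_of_eventuallyEq
    ((stepIndex_eventuallyEq hs x).fun_comp v) rfl

end StepIndex

lemma exists_eqOn_boundedRightContinuousFrom {I J : ℕ} (hJ : 1 ≤ J) {t : ℕ → ℝ}
    (ht : MonotoneOn t (Iic (I + J - 1))) {h δ : ℝ} (hδ : 0 ≤ δ) {ζ : ℝ → ℝ} {κ : ℕ → ℕ}
    (hκ : ∀ j, κ j ≤ J)
    (hstep : ∀ j : ℕ, j + 1 ≤ J - 1 → ∀ x, t (I + j) ≤ x → x < t (I + j + 1) →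
      ζ x = h + (κ j : ℝ) * δ)
    (hlast : ∀ x, t (I + J - 1) ≤ x → ζ x = h + (κ (J - 1) : ℝ) * δ) :
    ∃ N, EqOn ζ N (Ici (t I)) ∧ BoundedRightContinuousFrom N (t I) h (h + J * δ) := by
  have hs : MonotoneOn (fun j => t (I + j)) (Iic (J - 1)) := fun i hi j hj hij =>
    ht (by simp only [mem_Iic] at hi ⊢; omega) (by simp only [mem_Iic] at hj ⊢; omega) (by omega)
  have hv (j : ℕ) : h + (κ j : ℝ) * δ ∈ Icc h (h + J * δ) :=
    ⟨le_add_of_nonneg_right (by positivity), by gcongr; exact_mod_cast hκ j⟩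
  have hlast' : t (I + (J - 1)) = t (I + J - 1) := by congr 1; omega
  exact ⟨_, eqOn_comp_stepIndex hstep (hlast' ▸ hlast),
    boundedRightContinuousFrom_comp_stepIndex hs hv (t I)⟩

theorem family_first_coal_diff_bound_general (I J : ℕ) (hJ : 1 ≤ J)
    (t : ℕ → ℝ) (ht0 : t 0 = 0) (htmono : ∀ i j, i < j → j ≤ I + J - 1 → t i < t j)
    (h δ ε τB : ℝ) (hh : 0 < h) (hδ : 0 < δ)
    (hτB : τB = t I - t (I - 1))
    (η η' : ℝ → ℝ)
    (hηpos : ∀ x, 0 ≤ x → 0 < η x)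
    -- the two models agree before time t_I
    (hagree : ∀ x, 0 ≤ x → x < t I → η x = η' x)
    -- the bottleneck: minimal size ε, attained on the I-th epoch [t_{I-1}, t_I)
    (hbot : ∀ x, t (I - 1) ≤ x → x < t I → η x = ε)
    -- step structure on [t_I, ∞): values h + k δ, non-decreasing jump counters k, k' ≤ J
    (k k' : ℕ → ℕ)
    (hkJ : ∀ j, k j ≤ J) (hk'J : ∀ j, k' j ≤ J)
    (hηstep : ∀ j : ℕ, j + 1 ≤ J - 1 → ∀ x, t (I + j) ≤ x → x < t (I + j + 1) →
      η x = h + (k j : ℝ) * δ)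
    (hηlast : ∀ x, t (I + J - 1) ≤ x → η x = h + (k (J - 1) : ℝ) * δ)
    (hη'step : ∀ j : ℕ, j + 1 ≤ J - 1 → ∀ x, t (I + j) ≤ x → x < t (I + j + 1) →
      η' x = h + (k' j : ℝ) * δ)
    (hη'last : ∀ x, t (I + J - 1) ≤ x → η' x = h + (k' (J - 1) : ℝ) * δ)
    (m : ℕ) (hm : 2 ≤ m) (a : ℝ) (ha : a = m * (m - 1) / 2) :
    firstCoalTime η' a - firstCoalTime η a ≤
      J * (δ / a) * Real.exp (-(a * τB / ε)) := by
  have ha0 : 0 < a := by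
    have : (2 : ℝ) ≤ m := by exact_mod_cast hm
    rw [ha]; nlinarith
  have ht : MonotoneOn t (Iic (I + J - 1)) := fun i _ j hj hij =>
    hij.eq_or_lt.elim (fun e => e ▸ le_rfl) fun hlt => (htmono i j hlt hj).le
  have hP : 0 ≤ t (I - 1) := ht0 ▸ ht (by simp) (by simp only [mem_Iic]; omega) (Nat.zero_le _)
  have hPT : t (I - 1) ≤ t I := ht (by simp only [mem_Iic]; omega) (by simp only [mem_Iic]; omega)
    (Nat.sub_le I 1)
  have hT := hP.trans hPT
  obtain ⟨N, hηN, hN⟩ := exists_eqOn_boundedRightContinuousFrom hJ ht hδ.le hkJ hηstep hηlast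
  obtain ⟨N', hη'N', hN'⟩ :=
    exists_eqOn_boundedRightContinuousFrom hJ ht hδ.le hk'J hη'step hη'last
  have hpos : ∀ x ∈ Ioo 0 (t I), 0 < η x := fun x hx => hηpos x hx.1.le
  have hagree' : EqOn η η' (Ioo 0 (t I)) := fun x hx => hagree x hx.1.le hx.2
  by_cases hint : IntervalIntegrable (fun x => 1 / η x) volume 0 (t I)
  · calc firstCoalTime η' a - firstCoalTime η a
        ≤ survival η a 0 (t I) * ((h + J * δ - h) / a) :=
          firstCoalTime_sub_le hT ha0 hpos hint hagree' hN hN' hh hηN hη'N'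
      _ = J * (δ / a) * survival η a 0 (t I) := by ring
      _ ≤ J * (δ / a) * Real.exp (-(a * τB / ε)) := by
          rw [hτB]
          gcongr
          exact survival_le_of_eqOn_Ico ha0.le hP hPT hpos hint fun x hx => hbot x hx.1 hx.2
  · rw [firstCoalTime_eq_zero_of_not_intervalIntegrable hT ha0 hint hN hh hηN,
      firstCoalTime_eq_zero_of_not_intervalIntegrable hT ha0
        ((intervalIntegrable_one_div_congr hT hagree').not.1 hint) hN' hh hη'N', sub_zero]
    positivity

/-- Lemma 1 of the paper: for two members `η ≤ η'` of the family `F_{I,J}` of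
piecewise-constant models — agreeing on `[0, t_I)`, with a bottleneck of size
`ε = min η = min η'` and duration `τ_B = t_I - t_{I-1}` as the `I`-th epoch, and on
`[t_I, ∞)` non-decreasing step functions with values in `{h + kδ : 0 ≤ k ≤ J}` jumping
by `δ` only at the change points `t_I < t_{I+1} < … < t_{I+J-1}` — the expected first
coalescence times satisfy `c_m^{(η')} - c_m^{(η)} ≤ J (δ/a_m) e^{-a_m τ_B / ε}`. -/
theorem family_first_coal_diff_bound (I J : ℕ) (hI : 1 ≤ I) (hJ : 1 ≤ J)
    (t : ℕ → ℝ) (ht0 : t 0 = 0) (htmono : ∀ i j, i < j → j ≤ I + J - 1 → t i < t j)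
    (h δ ε τB : ℝ) (hh : 0 < h) (hδ : 0 < δ) (hε : 0 < ε) (hεh : ε ≤ h)
    (hτB : τB = t I - t (I - 1))
    (η η' : ℝ → ℝ)
    (hηpos : ∀ x, 0 ≤ x → 0 < η x) (hη'pos : ∀ x, 0 ≤ x → 0 < η' x)
    -- the two models agree before time t_I
    (hagree : ∀ x, 0 ≤ x → x < t I → η x = η' x)
    -- the bottleneck: minimal size ε, attained on the I-th epoch [t_{I-1}, t_I)
    (hmin : ∀ x, 0 ≤ x → ε ≤ η x)
    (hbot : ∀ x, t (I - 1) ≤ x → x < t I → η x = ε)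
    -- step structure on [t_I, ∞): values h + k δ, non-decreasing jump counters k, k' ≤ J
    (k k' : ℕ → ℕ) (hkmono : Monotone k) (hk'mono : Monotone k')
    (hkJ : ∀ j, k j ≤ J) (hk'J : ∀ j, k' j ≤ J)
    (hηstep : ∀ j : ℕ, j + 1 ≤ J - 1 → ∀ x, t (I + j) ≤ x → x < t (I + j + 1) →
      η x = h + (k j : ℝ) * δ)
    (hηlast : ∀ x, t (I + J - 1) ≤ x → η x = h + (k (J - 1) : ℝ) * δ)
    (hη'step : ∀ j : ℕ, j + 1 ≤ J - 1 → ∀ x, t (I + j) ≤ x → x < t (I + j + 1) →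
      η' x = h + (k' j : ℝ) * δ)
    (hη'last : ∀ x, t (I + J - 1) ≤ x → η' x = h + (k' (J - 1) : ℝ) * δ)
    -- η ≤ η' pointwise on [t_I, ∞)
    (hle : ∀ x, t I ≤ x → η x ≤ η' x)
    (m : ℕ) (hm : 2 ≤ m) (a : ℝ) (ha : a = m * (m - 1) / 2) :
    firstCoalTime η' a - firstCoalTime η a ≤
      J * (δ / a) * Real.exp (-(a * τB / ε)) :=
  family_first_coal_diff_bound_general I J hJ t ht0 htmono h δ ε τB hh hδ hτB η η' hηpos hagree hbot
    k k' hkJ hk'J hηstep hηlast hη'step hη'last m hm a ha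
end

section
/- (Varshamov–Gilbert) For every integer J ≥ 8 there exists a subset X = {w^0, w^1, …, w^M} of the hypercube {0,1}^J such that w^0 = (0,…,0), M ≥ 2^{J/8}, and the Hamming distance between any two distinct elements of X is at least J/8. -/
/-!
A maximal family of binary words containing `0` whose pairwise distances exceed `r` is a
covering: every word lies within distance `r` of a member, so the family has at least
`2 ^ J / V(r)` members, `V(r)` the volume of a Hamming ball of radius `r`. Weighting each word
`y` by `3 ^ (number of coordinates where y agrees with x)` gives `V(r) * 3 ^ (J - r) ≤ 4 ^ J`.
With `r = ⌊(J - 1) / 8⌋`, for which distance `> r` means distance `≥ J/8`, the family therefore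
has at least `3 ^ (7J/8) / 2 ^ J ≥ 2 * 2 ^ (J/8)` members, since `3 ^ 7 > 2 ^ 9`.
-/

open Finset

theorem Finset.exists_superset_pairwise_not_covering {α : Type*} [Finite α]
    {R : α → α → Prop} (hR : ∀ a, R a a) (hRs : ∀ a b, R a b → R b a) {s : Finset α}
    (hs : (s : Set α).Pairwise fun a b ↦ ¬R a b) :
    ∃ t, s ⊆ t ∧ (t : Set α).Pairwise (fun a b ↦ ¬R a b) ∧ ∀ y, ∃ c ∈ t, R c y := by
  classical
  obtain ⟨t, hst, hmax⟩ := Finite.exists_le_maximal (p := fun t : Finset α ↦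
    (t : Set α).Pairwise fun a b ↦ ¬R a b) hs
  refine ⟨t, hst, hmax.prop, fun y ↦ ?_⟩
  by_contra! hy
  have hins : ((insert y t : Finset α) : Set α).Pairwise fun a b ↦ ¬R a b := by
    rw [coe_insert, Set.pairwise_insert]
    exact ⟨hmax.prop, fun c hc _ ↦ ⟨fun h ↦ hy c hc (hRs _ _ h), hy c hc⟩⟩
  exact hy y (hmax.2 hins (subset_insert y t) (mem_insert_self y t)) (hR y)

section HammingBall

variable {ι β : Type*} [Fintype ι] [DecidableEq ι] [Fintype β] [DecidableEq β]

theorem Fintype.sum_ite_eq_else_one (a : β) (μ : ℕ) :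
    ∑ b, (if a = b then μ else 1) = μ + (Fintype.card β - 1) := by
  rw [← add_sum_erase _ _ (mem_univ a), if_pos rfl,
    Finset.sum_congr rfl fun b hb ↦ if_neg (ne_of_mem_erase hb).symm]
  simp [card_erase_of_mem]

theorem sum_pow_card_agree (x : ι → β) (μ : ℕ) :
    ∑ y : ι → β, μ ^ #{i | x i = y i} = (μ + (Fintype.card β - 1)) ^ Fintype.card ι := by
  calc ∑ y : ι → β, μ ^ #{i | x i = y i}
      = ∑ y : ι → β, ∏ i, (if x i = y i then μ else 1) := by
        simp [prod_ite]
    _ = ∏ i, ∑ b, (if x i = b then μ else 1) :=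
        (Fintype.prod_sum fun i b ↦ if x i = b then μ else 1).symm
    _ = _ := by simp [Fintype.sum_ite_eq_else_one]

theorem card_hammingBall_mul_pow_le (x : ι → β) (r : ℕ) {μ : ℕ} (hμ : 1 ≤ μ) :
    #{y | hammingDist x y ≤ r} * μ ^ (Fintype.card ι - r) ≤
      (μ + (Fintype.card β - 1)) ^ Fintype.card ι := by
  rw [← sum_pow_card_agree x μ, ← smul_eq_mul, ← sum_const]
  refine (sum_le_sum fun y hy ↦ pow_le_pow_right₀ hμ ?_).trans
    (sum_le_sum_of_subset (subset_univ _))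
  have hsplit := card_filter_add_card_filter_not (s := univ) fun i ↦ x i = y i
  simp only [mem_filter, mem_univ, true_and, hammingDist, ne_eq] at hy
  rw [card_univ] at hsplit
  omega

theorem exists_code_card_mul_pow_le (x₀ : ι → β) (r : ℕ) {μ : ℕ} (hμ : 1 ≤ μ) :
    ∃ C : Finset (ι → β), x₀ ∈ C ∧ (C : Set (ι → β)).Pairwise (fun a b ↦ r < hammingDist a b) ∧
      Fintype.card β ^ Fintype.card ι * μ ^ (Fintype.card ι - r) ≤
        #C * (μ + (Fintype.card β - 1)) ^ Fintype.card ι := by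
  obtain ⟨C, hx₀C, hsep, hcover⟩ := exists_superset_pairwise_not_covering
    (R := fun a b : ι → β ↦ hammingDist a b ≤ r) (by simp)
    (fun a b h ↦ hammingDist_comm a b ▸ h) (s := {x₀}) (by simp)
  refine ⟨C, hx₀C (mem_singleton_self _), hsep.mono' fun a b ↦ Nat.lt_of_not_le, ?_⟩
  have hcovered : (univ : Finset (ι → β)) ⊆ C.biUnion fun c ↦ {y | hammingDist c y ≤ r} :=
    fun y _ ↦ by simpa using hcover y
  calc Fintype.card β ^ Fintype.card ι * μ ^ (Fintype.card ι - r)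
      = #(univ : Finset (ι → β)) * μ ^ (Fintype.card ι - r) := by simp
    _ ≤ (∑ c ∈ C, #{y | hammingDist c y ≤ r}) * μ ^ (Fintype.card ι - r) :=
        Nat.mul_le_mul_right _ ((card_le_card hcovered).trans card_biUnion_le)
    _ ≤ #C * (μ + (Fintype.card β - 1)) ^ Fintype.card ι := by
        rw [sum_mul, ← smul_eq_mul]
        exact sum_le_card_nsmul _ _ _ fun c _ ↦ card_hammingBall_mul_pow_le c r hμ

end HammingBall

theorem Finset.exists_equiv_fin_zero {α : Type*} {s : Finset α} {x : α} (hx : x ∈ s) {n : ℕ}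
    (hn : #s = n + 1) : ∃ e : Fin (n + 1) ≃ s, e 0 = ⟨x, hx⟩ := by
  let e₀ : Fin (n + 1) ≃ s := (s.equivFin.trans (finCongr hn)).symm
  exact ⟨(Equiv.swap 0 (e₀.symm ⟨x, hx⟩)).trans e₀, by simp⟩

theorem two_pow_nine_mul_add_eight_le_three_pow_seven_mul {J : ℕ} (hJ : 8 ≤ J) :
    2 ^ (9 * J + 8) ≤ 3 ^ (7 * J) := by
  induction J, hJ using Nat.le_induction with
  | base => norm_num
  | succ n _ ih =>
    rw [show 2 ^ (9 * (n + 1) + 8) = 2 ^ (9 * n + 8) * 512 by ring,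
      show 3 ^ (7 * (n + 1)) = 3 ^ (7 * n) * 2187 by ring]
    exact Nat.mul_le_mul ih (by norm_num)

theorem two_pow_add_eight_le_pow_eight {J r N : ℕ} (hJ : 8 ≤ J) (hr : 8 * r ≤ J)
    (h : 2 ^ J * 3 ^ (J - r) ≤ N * 4 ^ J) : 2 ^ (J + 8) ≤ N ^ 8 := by
  have h8 := Nat.pow_le_pow_left h 8
  have h3 : 2 ^ (9 * J + 8) ≤ 3 ^ ((J - r) * 8) :=
    (two_pow_nine_mul_add_eight_le_three_pow_seven_mul hJ).trans
      (Nat.pow_le_pow_right (by norm_num) (by omega))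
  rw [mul_pow, mul_pow, ← pow_mul, ← pow_mul, show (4 : ℕ) = 2 ^ 2 by rfl, ← pow_mul,
    ← pow_mul] at h8
  refine le_of_mul_le_mul_right ?_ (by positivity : 0 < 2 ^ (16 * J))
  calc 2 ^ (J + 8) * 2 ^ (16 * J) = 2 ^ (J * 8) * 2 ^ (9 * J + 8) := by ring
    _ ≤ 2 ^ (J * 8) * 3 ^ ((J - r) * 8) := Nat.mul_le_mul_left _ h3
    _ ≤ N ^ 8 * 2 ^ (2 * (J * 8)) := h8
    _ = N ^ 8 * 2 ^ (16 * J) := by ring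

theorem two_rpow_div_eight_le {J n : ℕ} (h : 2 ^ (J + 8) ≤ (n + 1) ^ 8) :
    (2 : ℝ) ^ ((J : ℝ) / 8) ≤ n := by
  set x : ℝ := 2 ^ ((J : ℝ) / 8)
  have hx8 : x ^ 8 = 2 ^ J := by
    rw [← Real.rpow_natCast, ← Real.rpow_mul zero_le_two]
    norm_num
  have hx1 : 1 ≤ x := Real.one_le_rpow one_le_two (by positivity)
  have h2x : 2 * x ≤ n + 1 := by
    refine (pow_le_pow_iff_left₀ (by positivity) (by positivity) (by norm_num : 8 ≠ 0)).1 ?_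
    rw [mul_pow, hx8, ← pow_add, add_comm]
    exact_mod_cast h
  linarith

/-- Varshamov–Gilbert: for every `J ≥ 8` there is a family `w^0, …, w^M` in `{0,1}^J`
with `w^0 = 0`, `M ≥ 2^{J/8}`, and pairwise Hamming distance at least `J/8`. -/
theorem varshamov_gilbert (J : ℕ) (hJ : 8 ≤ J) :
    ∃ (M : ℕ) (w : Fin (M + 1) → (Fin J → Bool)),
      w 0 = (fun _ => false) ∧
      (2 : ℝ) ^ ((J : ℝ) / 8) ≤ M ∧
      ∀ a b : Fin (M + 1), a ≠ b →
        (J : ℝ) / 8 ≤ (Finset.univ.filter (fun i => w a i ≠ w b i)).card := by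
  obtain ⟨C, h0C, hsep, hcount⟩ :=
    exists_code_card_mul_pow_le (fun _ : Fin J ↦ false) ((J - 1) / 8) (μ := 3) (by norm_num)
  norm_num only [Fintype.card_bool, Fintype.card_fin] at hcount
  obtain ⟨n, hn⟩ : ∃ n, #C = n + 1 := Nat.exists_eq_add_one.2 (card_pos.2 ⟨_, h0C⟩)
  obtain ⟨e, he⟩ := C.exists_equiv_fin_zero h0C hn
  refine ⟨n, fun i ↦ e i, congrArg Subtype.val he, ?_, fun a b hab ↦ ?_⟩
  · rw [hn] at hcount
    exact two_rpow_div_eight_le (two_pow_add_eight_le_pow_eight hJ (by omega) hcount)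
  · have hdist := hsep (e a).2 (e b).2 (Subtype.coe_injective.ne (e.injective.ne hab))
    change _ < hammingDist (e a : Fin J → Bool) (e b) at hdist
    change (J : ℝ) / 8 ≤ (hammingDist (e a : Fin J → Bool) (e b) : ℝ)
    rw [div_le_iff₀ (by norm_num)]
    exact_mod_cast (by omega : J ≤ hammingDist (e a : Fin J → Bool) (e b) * 8)
end

section
/- (Generalized Fano lower bound) Let Θ be a parameter set with a pseudometric d, and let {P_θ : θ ∈ Θ} be probability distributions on a finite set. Suppose θ_1, …, θ_r ∈ Θ (r ≥ 2) satisfy d(θ_a, θ_b) ≥ α for all a ≠ b and D(P_{θ_a} ‖ P_{θ_b}) ≤ β for all a, b. Then for any estimator θ̂ based on s i.i.d. observations X_1,…,X_s ~ P_θ, we have inf_{θ̂} max_{a} E_{θ_a}[d(θ̂(X_1,…,X_s), θ_a)] ≥ (α/2)·(1 − (s·β + log 2)/log r). -/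
/-!
Estimation reduces to testing: let `ψ x` be a hypothesis nearest to the estimate. Where
`ψ x ≠ a`, separation and the triangle inequality give `d(θ̂, θ_a) ≥ α / 2`, so by Markov the risk
at `θ_a` is at least `α / 2` times the error probability of the test `ψ` under `P_{θ_a}`.

Fano's inequality bounds that error from below. With `a` uniform on `r` labels, compare the joint
law `Q_a(x) / r` with `R(x) w(a, x)`, where `R` is any one of the hypotheses and `w` gives the
guess `ψ x` weight `1/2` and every other label `1/(2r)`, so that `∑_a w(a, x) ≤ 1`. Gibbs'
inequality for this pair says `(1 - average error) log r ≤ max_a D(Q_a ‖ R) + log 2`. The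
divergence between `s`-fold products is `s` times the single-sample one.
-/

open Finset Real

noncomputable def discreteKL {X : Type*} [Fintype X] (p q : X → ℝ) : ℝ :=
  ∑ x, p x * log (p x / q x)

section Gibbs

lemma sub_le_mul_log_div {p q : ℝ} (hp : 0 ≤ p) (hq : 0 < q) : p - q ≤ p * log (p / q) := by
  have h := mul_nonneg hq.le (InformationTheory.klFun_nonneg (div_nonneg hp hq.le))
  rw [InformationTheory.klFun_apply] at h
  field_simp at h
  linarith

variable {X : Type*} [Fintype X]

lemma sum_sub_sum_le_discreteKL {p q : X → ℝ} (hp : ∀ x, 0 ≤ p x) (hq : ∀ x, 0 < q x) :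
    ∑ x, p x - ∑ x, q x ≤ discreteKL p q := by
  rw [← sum_sub_distrib]
  exact sum_le_sum fun x _ => sub_le_mul_log_div (hp x) (hq x)

end Gibbs

section Tensorization

variable {ι X : Type*} [Fintype ι] [DecidableEq ι] [Fintype X]

lemma sum_pi_prod_eq_one {p : X → ℝ} (hp : ∑ y, p y = 1) :
    ∑ x : ι → X, ∏ i, p (x i) = 1 := by
  rw [← Fintype.prod_sum]
  simp [hp]

lemma sum_pi_prod_mul_apply {p : X → ℝ} (hp : ∑ y, p y = 1) (g : X → ℝ) (i : ι) :
    ∑ x : ι → X, (∏ j, p (x j)) * g (x i) = ∑ y, p y * g y := by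
  have h := Fintype.prod_sum fun j (y : X) => p y * if j = i then g y else 1
  simp only [prod_mul_distrib, prod_ite_eq', mem_univ, if_true] at h
  rw [← h, prod_eq_single i (fun j _ hj => by simp [hj, hp]) (by simp)]
  simp

lemma discreteKL_pi {p q : X → ℝ} (hp : ∀ y, 0 < p y) (hq : ∀ y, 0 < q y)
    (hpsum : ∑ y, p y = 1) :
    discreteKL (fun x : ι → X => ∏ i, p (x i)) (fun x => ∏ i, q (x i)) =
      Fintype.card ι * discreteKL p q := by
  have hlog : ∀ x : ι → X,
      log ((∏ i, p (x i)) / ∏ i, q (x i)) = ∑ i, log (p (x i) / q (x i)) := fun x => by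
    rw [← prod_div_distrib, log_prod fun i _ => (div_pos (hp _) (hq _)).ne']
  simp only [discreteKL, hlog, mul_sum]
  rw [sum_comm]
  simp only [sum_pi_prod_mul_apply hpsum (fun y => log (p y / q y)), sum_const, card_univ,
    nsmul_eq_mul, mul_sum]

end Tensorization

section Fano

variable {ι X : Type*} [Fintype ι] [DecidableEq ι]

noncomputable def fanoWeight (ψ : X → ι) (a : ι) (x : X) : ℝ :=
  if ψ x = a then 2⁻¹ else (2 * Fintype.card ι)⁻¹

lemma fanoWeight_pos [Nonempty ι] (ψ : X → ι) (a : ι) (x : X) : 0 < fanoWeight ψ a x := by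
  unfold fanoWeight; split_ifs <;> positivity

lemma sum_fanoWeight_le_one (ψ : X → ι) (x : X) : ∑ a, fanoWeight ψ a x ≤ 1 := by
  have : Nonempty ι := ⟨ψ x⟩
  calc ∑ a, fanoWeight ψ a x ≤ ∑ a, ((2 * Fintype.card ι : ℝ)⁻¹ + if ψ x = a then 2⁻¹ else 0) :=
        sum_le_sum fun a _ => by unfold fanoWeight; split_ifs <;> simp
    _ = 1 := by
        rw [sum_add_distrib, sum_ite_eq, if_pos (mem_univ _), sum_const, card_univ, nsmul_eq_mul]
        field_simp
        norm_num

lemma log_fanoWeight (ψ : X → ι) (a : ι) (x : X) :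
    log (fanoWeight ψ a x) = -log 2 - if ψ x ≠ a then log (Fintype.card ι) else 0 := by
  have : Nonempty ι := ⟨ψ x⟩
  unfold fanoWeight
  by_cases h : ψ x = a
  · simp [h]
  · rw [if_neg h, if_pos h, log_inv, log_mul two_ne_zero (by positivity)]
    ring

lemma fano_average_error [Nonempty ι] [Fintype X] (Q : ι → X → ℝ) (R : X → ℝ)
    (hQ : ∀ a x, 0 < Q a x) (hQsum : ∀ a, ∑ x, Q a x = 1) (hR : ∀ x, 0 < R x)
    (hRsum : ∑ x, R x = 1) (ψ : X → ι) {B : ℝ} (hB : ∀ a, discreteKL (Q a) R ≤ B) :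
    (1 - (∑ a, ∑ x with ψ x ≠ a, Q a x) / Fintype.card ι) * log (Fintype.card ι) ≤
      B + log 2 := by
  have hw := log_fanoWeight (X := X) ψ
  set r : ℝ := (Fintype.card ι : ℝ)
  have hr : 0 < r := Nat.cast_pos.mpr Fintype.card_pos
  let p : ι × X → ℝ := fun ax => Q ax.1 ax.2 / r
  let q : ι × X → ℝ := fun ax => R ax.2 * fanoWeight ψ ax.1 ax.2
  have hp_sum : ∑ ax, p ax = 1 := by
    simp only [p, Fintype.sum_prod_type, ← sum_div, hQsum, sum_const, card_univ, nsmul_eq_mul,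
      mul_one]
    exact div_self hr.ne'
  have hq_sum : ∑ ax, q ax ≤ 1 := by
    rw [Fintype.sum_prod_type_right, ← hRsum]
    exact sum_le_sum fun x _ =>
      (mul_sum _ _ _).symm.trans_le (mul_le_of_le_one_right (hR x).le (sum_fanoWeight_le_one ψ x))
  have hterm : ∀ a x, p (a, x) * log (p (a, x) / q (a, x)) =
      Q a x * log (Q a x / R x) / r + Q a x / r * (log 2 - log r) +
        (if ψ x ≠ a then Q a x else 0) * log r / r := fun a x => by
    have hpos := fanoWeight_pos ψ a x
    have hlog : log (p (a, x) / q (a, x)) =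
        log (Q a x / R x) - log r - log (fanoWeight ψ a x) := by
      rw [show p (a, x) / q (a, x) = Q a x / R x / (r * fanoWeight ψ a x) by
        simp only [p, q]; field_simp, log_div (div_pos (hQ a x) (hR x)).ne' (by positivity),
        log_mul hr.ne' hpos.ne', sub_sub]
    rw [hlog, hw a x]
    split_ifs <;> simp only [p] <;> ring
  have hsplit : discreteKL p q = (∑ a, discreteKL (Q a) R) / r + (log 2 - log r) +
      log r * ((∑ a, ∑ x with ψ x ≠ a, Q a x) / r) := by
    simp only [discreteKL, Fintype.sum_prod_type, hterm, sum_add_distrib, sum_filter, ← sum_div,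
      ← sum_mul, hQsum, sum_const, card_univ, nsmul_eq_mul, mul_one]
    field_simp
    rfl
  have hgibbs := sum_sub_sum_le_discreteKL (p := p) (q := q)
    (fun ax => (div_pos (hQ ax.1 ax.2) hr).le)
    (fun ax => mul_pos (hR ax.2) (fanoWeight_pos ψ ax.1 ax.2))
  have hKL : (∑ a, discreteKL (Q a) R) / r ≤ B := by
    rw [div_le_iff₀ hr]
    calc ∑ a, discreteKL (Q a) R ≤ ∑ _a : ι, B := sum_le_sum fun a _ => hB a
      _ = B * r := by rw [sum_const, card_univ, nsmul_eq_mul, mul_comm]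
  linarith

lemma exists_fano_error_ge (hcard : 2 ≤ Fintype.card ι) [Fintype X]
    (Q : ι → X → ℝ) (R : X → ℝ) (hQ : ∀ a x, 0 < Q a x) (hQsum : ∀ a, ∑ x, Q a x = 1)
    (hR : ∀ x, 0 < R x) (hRsum : ∑ x, R x = 1) (ψ : X → ι) {B : ℝ}
    (hB : ∀ a, discreteKL (Q a) R ≤ B) :
    ∃ a, 1 - (B + log 2) / log (Fintype.card ι) ≤ ∑ x with ψ x ≠ a, Q a x := by
  have : Nonempty ι := Fintype.card_pos_iff.mp (by omega : 0 < Fintype.card ι)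
  have hr : (0 : ℝ) < Fintype.card ι := by positivity
  have hlog : 0 < log (Fintype.card ι) :=
    log_pos (by exact_mod_cast (by omega : 1 < Fintype.card ι))
  obtain ⟨a, -, ha⟩ := exists_le_of_sum_le (univ_nonempty (α := ι))
    (f := fun _ => 1 - (B + log 2) / log (Fintype.card ι))
    (g := fun a => ∑ x with ψ x ≠ a, Q a x) (by
    rw [sum_const, card_univ, nsmul_eq_mul, ← le_div_iff₀' hr, sub_le_comm, le_div_iff₀ hlog]
    exact fano_average_error Q R hQ hQsum hR hRsum ψ hB)
  exact ⟨a, ha⟩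

end Fano

lemma mul_sum_le_sum_mul_of_le {X : Type*} [Fintype X] {w f : X → ℝ} (hw : ∀ x, 0 ≤ w x)
    (hf : ∀ x, 0 ≤ f x) {s : Finset X} {t : ℝ} (ht : ∀ x ∈ s, t ≤ f x) :
    t * ∑ x ∈ s, w x ≤ ∑ x, w x * f x :=
  calc t * ∑ x ∈ s, w x = ∑ x ∈ s, w x * t := by rw [mul_sum]; simp only [mul_comm]
    _ ≤ ∑ x ∈ s, w x * f x := sum_le_sum fun x hx => mul_le_mul_of_nonneg_left (ht x hx) (hw x)
    _ ≤ ∑ x, w x * f x :=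
        sum_le_sum_of_subset_of_nonneg (subset_univ s) fun x _ _ => mul_nonneg (hw x) (hf x)

lemma dist_div_two_le_of_dist_le {Θ : Type*} [PseudoMetricSpace Θ] {x y z : Θ}
    (h : dist x y ≤ dist x z) : dist y z / 2 ≤ dist x z := by
  linarith [dist_triangle_left y z x]

theorem generalized_fano_general {Θ : Type*} [PseudoMetricSpace Θ]
    (k r s : ℕ) (hr : 2 ≤ r)
    (θ : Fin r → Θ) (α β : ℝ) (hα : 0 < α)
    (P : Fin r → Fin k → ℝ)
    (hPpos : ∀ a x, 0 < P a x) (hPsum : ∀ a, ∑ x, P a x = 1)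
    (hsep : ∀ a b : Fin r, a ≠ b → α ≤ dist (θ a) (θ b))
    (hKL : ∀ a b : Fin r, ∑ x, P a x * Real.log (P a x / P b x) ≤ β)
    (est : (Fin s → Fin k) → Θ) :
    ∃ a : Fin r,
      (α / 2) * (1 - ((s : ℝ) * β + Real.log 2) / Real.log r) ≤
        ∑ x : Fin s → Fin k, (∏ i, P a (x i)) * dist (est x) (θ a) := by
  have : NeZero r := ⟨by omega⟩
  choose ψ _ hψ using fun x => exists_min_image univ (fun b => dist (est x) (θ b)) univ_nonempty
  let Q a (x : Fin s → Fin k) := ∏ i, P a (x i)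
  have hQ a x : 0 < Q a x := prod_pos fun i _ => hPpos a (x i)
  have hKLQ a b : discreteKL (Q a) (Q b) ≤ s * β := by
    rw [discreteKL_pi (hPpos a) (hPpos b) (hPsum a), Fintype.card_fin]
    exact mul_le_mul_of_nonneg_left (hKL a b) s.cast_nonneg
  obtain ⟨a, ha⟩ := exists_fano_error_ge (by simpa using hr) Q (Q 0) hQ
    (fun a => sum_pi_prod_eq_one (hPsum a)) (hQ 0) (sum_pi_prod_eq_one (hPsum 0)) ψ
    (fun a => hKLQ a 0)
  refine ⟨a, ?_⟩
  rw [Fintype.card_fin] at ha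
  calc α / 2 * (1 - (s * β + log 2) / log r) ≤ α / 2 * ∑ x with ψ x ≠ a, Q a x := by gcongr
    _ ≤ _ := mul_sum_le_sum_mul_of_le (fun x => (hQ a x).le) (fun x => dist_nonneg) fun x hx =>
        le_trans (by linarith [hsep _ _ (mem_filter.mp hx).2])
          (dist_div_two_le_of_dist_le (hψ x a (mem_univ a)))

/-- Generalized Fano lower bound: if `θ_1, …, θ_r` (`r ≥ 2`) are `α`-separated in a
pseudometric `d` and the finitely-supported distributions `P_{θ_a}` satisfy
`D(P_{θ_a} ‖ P_{θ_b}) ≤ β` for all `a, b`, then any estimator `θ̂` based on `s` i.i.d.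
observations has `max_a E_{θ_a}[d(θ̂, θ_a)] ≥ (α/2)(1 - (s β + log 2)/log r)`. -/
theorem generalized_fano {Θ : Type*} [PseudoMetricSpace Θ]
    (k r s : ℕ) (hr : 2 ≤ r) (hk : 1 ≤ k)
    (θ : Fin r → Θ) (α β : ℝ) (hα : 0 < α) (hβ : 0 ≤ β)
    (P : Fin r → Fin k → ℝ)
    (hPpos : ∀ a x, 0 < P a x) (hPsum : ∀ a, ∑ x, P a x = 1)
    (hsep : ∀ a b : Fin r, a ≠ b → α ≤ dist (θ a) (θ b))
    (hKL : ∀ a b : Fin r, ∑ x, P a x * Real.log (P a x / P b x) ≤ β)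
    (est : (Fin s → Fin k) → Θ) :
    ∃ a : Fin r,
      (α / 2) * (1 - ((s : ℝ) * β + Real.log 2) / Real.log r) ≤
        ∑ x : Fin s → Fin k, (∏ i, P a (x i)) * dist (est x) (θ a) :=
  generalized_fano_general k r s hr θ α β hα P hPpos hPsum hsep hKL est
end
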